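/- arXiv:2506.16789 — 2 statements merged into one kernel-verified Lean document; each statement's English description precedes it below -/
import Mathlib

section
/- A finite simple graph Γ is isomorphic to a double D(Γ') for some graph Γ' if and only if Γ admits a fixed-point-free involution that preserves each twin module (i.e., an involutive graph automorphism σ with σ(v) ≠ v and lk(σ(v)) = lk(v) for all vertices v). -/
/-!
Swapping the two copies of each vertex of a double is a fixed-point-free involution preserving
links, and such an involution transports along isomorphisms. Conversely, a fixed-point-free
involution `σ` with `lk (σ v) = lk v` splits the vertices into pairs `{v, σ v}`. Choosing a
representative of each pair labels every vertex by its pair and one bit; since adjacency only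
depends on the pairs, `Γ` is the double of the graph induced on the representatives.
-/

def GraphDouble {V : Type*} (G : SimpleGraph V) : SimpleGraph (V × Bool) where
  Adj p q := G.Adj p.1 q.1
  symm := ⟨fun _ _ h => G.adj_symm h⟩
  loopless := ⟨fun p h => G.irrefl h⟩

open Function

namespace SimpleGraph

variable {V W : Type*} {G : SimpleGraph V} {H : SimpleGraph W}

def IsTwinInvolution (σ : G ≃g G) : Prop :=
  Involutive σ ∧ (∀ v, σ v ≠ v) ∧ ∀ v, G.neighborSet (σ v) = G.neighborSet v

theorem IsTwinInvolution.adj_apply_left_iff {σ : G ≃g G} (hσ : IsTwinInvolution σ) (v w : V) :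
    G.Adj (σ v) w ↔ G.Adj v w :=
  Set.ext_iff.mp (hσ.2.2 v) w

theorem IsTwinInvolution.conj {τ : H ≃g H} (hτ : IsTwinInvolution τ) (e : G ≃g H) :
    IsTwinInvolution (e.trans (τ.trans e.symm)) := by
  refine ⟨fun v => ?_, fun v h => ?_, fun v => Set.ext fun w => ?_⟩
  · simp [hτ.1 (e v)]
  · exact hτ.2.1 (e v) ((e.symm_apply_eq).mp h)
  · change G.Adj (e.symm (τ (e v))) w ↔ G.Adj v w
    rw [← e.map_adj_iff, e.apply_symm_apply, hτ.adj_apply_left_iff, e.map_adj_iff]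

end SimpleGraph

namespace GraphDouble

open SimpleGraph

variable {V W : Type*}

def swap (G : SimpleGraph V) : GraphDouble G ≃g GraphDouble G where
  toEquiv := (Equiv.refl V).prodCongr Equiv.boolNot
  map_rel_iff' := Iff.rfl

theorem isTwinInvolution_swap (G : SimpleGraph V) : IsTwinInvolution (swap G) :=
  ⟨fun p => Prod.ext rfl (Bool.not_not p.2),
    fun p h => Bool.not_ne_self p.2 (congrArg Prod.snd h), fun _ => rfl⟩

def congr {G : SimpleGraph V} {H : SimpleGraph W} (e : G ≃g H) :
    GraphDouble G ≃g GraphDouble H where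
  toEquiv := e.toEquiv.prodCongr (Equiv.refl Bool)
  map_rel_iff' := e.map_adj_iff

end GraphDouble

section Involution

variable {V : Type*} {σ : V → V}

def involutionSetoid (hσ : Involutive σ) : Setoid V where
  r v w := w = v ∨ w = σ v
  iseqv := by
    refine ⟨fun _ => Or.inl rfl, ?_, ?_⟩
    · rintro v w (rfl | rfl)
      · exact Or.inl rfl
      · exact Or.inr (hσ v).symm
    · rintro v w u (rfl | rfl) (rfl | rfl)
      · exact Or.inl rfl
      · exact Or.inr rfl
      · exact Or.inr rfl
      · exact Or.inl (hσ v)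

theorem involutionSetoid_mk_apply (hσ : Involutive σ) (v : V) :
    (⟦σ v⟧ : Quotient (involutionSetoid hσ)) = ⟦v⟧ :=
  Quotient.sound (Or.inr (hσ v).symm)

noncomputable def involutionEquivProdBool [DecidableEq V] (hσ : Involutive σ)
    (hfix : ∀ v, σ v ≠ v) :
    V ≃ Quotient (involutionSetoid hσ) × Bool where
  toFun v := (⟦v⟧, decide ((⟦v⟧ : Quotient (involutionSetoid hσ)).out ≠ v))
  invFun p := cond p.2 (σ p.1.out) p.1.out
  left_inv v := by
    dsimp only
    generalize (⟦v⟧ : Quotient (involutionSetoid hσ)).out = u,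
      Quotient.mk_out (s := involutionSetoid hσ) v = h
    rcases h with rfl | rfl
    · simp
    · simp [(hfix u).symm]
  right_inv := by
    rintro ⟨q, _ | _⟩
    · simp
    · simp [involutionSetoid_mk_apply, (hfix q.out).symm]

end Involution

namespace SimpleGraph.IsTwinInvolution

variable {V : Type*} {G : SimpleGraph V} {σ : G ≃g G}

theorem adj_out_mk_iff (hσ : IsTwinInvolution σ) (v w : V) :
    G.Adj (⟦v⟧ : Quotient (involutionSetoid hσ.1)).out w ↔ G.Adj v w := by
  rcases Quotient.mk_out (s := involutionSetoid hσ.1) v with h | h <;> conv_rhs => rw [h]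
  exact (hσ.adj_apply_left_iff _ w).symm

noncomputable def isoGraphDouble [DecidableEq V] (hσ : IsTwinInvolution σ) :
    G ≃g GraphDouble (G.comap (Quotient.out : Quotient (involutionSetoid hσ.1) → V)) where
  toEquiv := involutionEquivProdBool hσ.1 hσ.2.1
  map_rel_iff' {v w} := by
    change G.Adj (⟦v⟧ : Quotient (involutionSetoid hσ.1)).out (⟦w⟧ : Quotient _).out ↔ G.Adj v w
    rw [hσ.adj_out_mk_iff, G.adj_comm, hσ.adj_out_mk_iff, G.adj_comm]

end SimpleGraph.IsTwinInvolution

/-- A finite simple graph is isomorphic to a double iff it admits a fixed-point-free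
involutive automorphism preserving each twin module (i.e. `lk (σ v) = lk v`). -/
theorem stmt1 {V : Type*} [Fintype V] (G : SimpleGraph V) :
    (∃ (W : Type) (G' : SimpleGraph W), Nonempty (G ≃g GraphDouble G')) ↔
      ∃ σ : G ≃g G, (∀ v : V, σ (σ v) = v) ∧ (∀ v : V, σ v ≠ v) ∧
        (∀ v : V, G.neighborSet (σ v) = G.neighborSet v) := by
  classical
  constructor
  · rintro ⟨W, G', ⟨e⟩⟩
    exact ⟨_, (GraphDouble.isTwinInvolution_swap G').conj e⟩
  · rintro ⟨σ, hσ : SimpleGraph.IsTwinInvolution σ⟩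
    let f := Finite.equivFin (Quotient (involutionSetoid hσ.1))
    exact ⟨_, _, ⟨hσ.isoGraphDouble.trans (GraphDouble.congr (SimpleGraph.Iso.map f _))⟩⟩
end

section
/- Let Γ be an incomplete triangle-free graph that is connected without cut vertices, and let v be a vertex. If w ∈ lk(v), then the twin module of the (single) vertex (w,0) in the link double D°_v(Γ) is exactly M_Γ(w)×{0}, where M_Γ(w) is the twin module of w in Γ. -/
/-- The link double `D°_v(Γ)`: two copies of `Γ` identified along `lk(v)` (represented by
the copies `(w, false)` for `w ∈ lk(v)`), with both copies of `v` removed. -/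
def LinkDouble {V : Type*} (G : SimpleGraph V) (v : V) :
    SimpleGraph {p : V × Bool // p.1 ≠ v ∧ (G.Adj v p.1 → p.2 = false)} where
  Adj p q := G.Adj p.1.1 q.1.1 ∧ (p.1.2 = q.1.2 ∨ G.Adj v p.1.1 ∨ G.Adj v q.1.1)
  symm := by
    constructor
    rintro p q ⟨h1, h2⟩
    refine ⟨h1.symm, ?_⟩
    rcases h2 with h | h | h
    · exact Or.inl h.symm
    · exact Or.inr (Or.inr h)
    · exact Or.inr (Or.inl h)
  loopless := ⟨fun p h => G.loopless.irrefl p.1.1 h.1⟩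

/-!
Since `Γ` has a third vertex and `Γ - v` is connected, `w ∈ lk(v)` has a neighbour `x ≠ v`,
and `x ∉ lk(v)` as `Γ` is triangle-free. Both copies `(x,0)` and `(x,1)` are then adjacent to
`(w,0)`, whereas a vertex outside the identified link only sees one copy of each vertex outside
the link; so a twin of `(w,0)` lies in the identified link. Vertices of the identified link are
adjacent to both copies of their `Γ`-neighbours, so for them twins in `D°_v(Γ)` are exactly twins
in `Γ`.
-/

namespace SimpleGraph

variable {V : Type*} {G : SimpleGraph V} {v w : V}

lemma exists_ne_ne_of_exists_not_adj (hinc : ∃ x y : V, x ≠ y ∧ ¬ G.Adj x y)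
    (hw : G.Adj v w) : ∃ z, z ≠ v ∧ z ≠ w := by
  by_contra! h
  obtain ⟨x, y, hxy, hnxy⟩ := hinc
  rcases eq_or_ne x v with rfl | hxv <;> rcases eq_or_ne y x with rfl | hyx
  · exact hxy rfl
  · exact hnxy (h y hyx ▸ hw)
  · exact hxy rfl
  · rcases eq_or_ne y v with rfl | hyv
    · exact hnxy (h x hxv ▸ hw.symm)
    · exact hxy ((h x hxv).trans (h y hyv).symm)

lemma exists_adj_ne_of_induce_connected (hcut : (G.induce {x | x ≠ v}).Connected)
    (hwv : w ≠ v) {z : V} (hzv : z ≠ v) (hzw : z ≠ w) : ∃ x, x ≠ v ∧ G.Adj w x := by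
  have : Nontrivial {x | x ≠ v} :=
    ⟨⟨⟨w, hwv⟩, ⟨z, hzv⟩, fun h => hzw (congrArg Subtype.val h).symm⟩⟩
  obtain ⟨x, hwx⟩ := hcut.preconnected.exists_adj_of_nontrivial ⟨w, hwv⟩
  exact ⟨x, x.2, hwx⟩

lemma not_adj_of_cliqueFree_three (htf : G.CliqueFree 3) {x : V} (hvw : G.Adj v w)
    (hwx : G.Adj w x) : ¬ G.Adj v x := fun hvx =>
  isIndepSet_neighborSet_of_triangleFree G htf w hvw.symm hwx hvx.ne hvx

end SimpleGraph

namespace LinkDouble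

open SimpleGraph

variable {V : Type*} {G : SimpleGraph V} {v : V}

@[simp]
lemma adj_iff {p q : {p : V × Bool // p.1 ≠ v ∧ (G.Adj v p.1 → p.2 = false)}} :
    (LinkDouble G v).Adj p q ↔
      G.Adj p.1.1 q.1.1 ∧ (p.1.2 = q.1.2 ∨ G.Adj v p.1.1 ∨ G.Adj v q.1.1) :=
  Iff.rfl

lemma adj_iff_of_adj {p r : {p : V × Bool // p.1 ≠ v ∧ (G.Adj v p.1 → p.2 = false)}}
    (hp : G.Adj v p.1.1) : (LinkDouble G v).Adj p r ↔ G.Adj p.1.1 r.1.1 := by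
  simp [hp]

lemma neighborSet_eq_iff_of_adj
    {p q : {p : V × Bool // p.1 ≠ v ∧ (G.Adj v p.1 → p.2 = false)}}
    (hp : G.Adj v p.1.1) (hq : G.Adj v q.1.1) :
    (LinkDouble G v).neighborSet q = (LinkDouble G v).neighborSet p ↔
      G.neighborSet q.1.1 = G.neighborSet p.1.1 := by
  simp only [Set.ext_iff, mem_neighborSet, adj_iff_of_adj hp, adj_iff_of_adj hq]
  refine ⟨fun h y => ?_, fun h r => h r.1.1⟩
  by_cases hyv : y = v
  · subst hyv
    exact iff_of_true hq.symm hp.symm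
  · exact h ⟨(y, false), hyv, fun _ => rfl⟩

lemma adj_of_neighborSet_eq {p q : {p : V × Bool // p.1 ≠ v ∧ (G.Adj v p.1 → p.2 = false)}}
    (hp : G.Adj v p.1.1) {x : V} (hxv : x ≠ v) (hvx : ¬ G.Adj v x) (hpx : G.Adj p.1.1 x)
    (h : (LinkDouble G v).neighborSet q = (LinkDouble G v).neighborSet p) : G.Adj v q.1.1 := by
  by_contra hq
  have hadj : ∀ b : Bool, (LinkDouble G v).Adj q ⟨(x, b), hxv, fun h => absurd h hvx⟩ := by
    intro b
    rw [← mem_neighborSet, h, mem_neighborSet, adj_iff_of_adj hp]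
    exact hpx
  have hcopy : ∀ b : Bool, q.1.2 = b := fun b => by simpa [hq, hvx] using (hadj b).2
  exact Bool.false_ne_true ((hcopy false).symm.trans (hcopy true))

end LinkDouble

open LinkDouble SimpleGraph in
theorem stmt11_general {V : Type*} (G : SimpleGraph V)
    (hinc : ∃ x y : V, x ≠ y ∧ ¬ G.Adj x y)
    (htf : G.CliqueFree 3)
    (hnocut : ∀ u : V, (G.induce {x : V | x ≠ u}).Connected)
    (v w : V) (hw : G.Adj v w) :
    ∀ p : {p : V × Bool // p.1 ≠ v ∧ (G.Adj v p.1 → p.2 = false)}, p.1.1 = w →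
      ∀ q : {p : V × Bool // p.1 ≠ v ∧ (G.Adj v p.1 → p.2 = false)},
        ((LinkDouble G v).neighborSet q = (LinkDouble G v).neighborSet p ↔
          (G.neighborSet q.1.1 = G.neighborSet w ∧ q.1.2 = false)) := by
  rintro p rfl q
  obtain ⟨z, hzv, hzw⟩ := exists_ne_ne_of_exists_not_adj hinc hw
  obtain ⟨x, hxv, hwx⟩ := exists_adj_ne_of_induce_connected (hnocut v) hw.ne' hzv hzw
  constructor
  · intro h
    have hq := adj_of_neighborSet_eq hw hxv (not_adj_of_cliqueFree_three htf hw hwx) hwx h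
    exact ⟨(neighborSet_eq_iff_of_adj hw hq).1 h, q.2.2 hq⟩
  · rintro ⟨h, -⟩
    have hvq : v ∈ G.neighborSet q.1.1 := h ▸ hw.symm
    have hq : G.Adj v q.1.1 := hvq.symm
    exact (neighborSet_eq_iff_of_adj hw hq).2 h

/-- Let `Γ` be an incomplete triangle-free graph, connected without cut vertices, and let
`w ∈ lk(v)`. Then the twin module of the (single) vertex `(w,0)` in `D°_v(Γ)` is exactly
`M_Γ(w) × {0}`. -/
theorem stmt11 {V : Type*} [Fintype V] (G : SimpleGraph V)
    (hinc : ∃ x y : V, x ≠ y ∧ ¬ G.Adj x y)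
    (htf : G.CliqueFree 3)
    (hconn : G.Connected)
    (hnocut : ∀ u : V, (G.induce {x : V | x ≠ u}).Connected)
    (v w : V) (hw : G.Adj v w) :
    ∀ p : {p : V × Bool // p.1 ≠ v ∧ (G.Adj v p.1 → p.2 = false)}, p.1.1 = w →
      ∀ q : {p : V × Bool // p.1 ≠ v ∧ (G.Adj v p.1 → p.2 = false)},
        ((LinkDouble G v).neighborSet q = (LinkDouble G v).neighborSet p ↔
          (G.neighborSet q.1.1 = G.neighborSet w ∧ q.1.2 = false)) :=
  stmt11_general G hinc htf hnocut v w hw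
end
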